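/- If ε(E_j) ≤ √(6 r(E_j)) for single-qubit channels (the upper bound of the fidelity–diamond relation with d = 2) and the noise is local, E = E_1 ⊗ … ⊗ E_n, then the average deviation from the twirled average satisfies E_{C̃}‖E(C̃) − E^T‖_◇ ≤ Σ_{j=1}^n 4√(6 r(Ē_j^T)), where Ē_j^T is the average of the local noise over the dressed gates. -/

import Mathlib

open scoped TensorProduct

variable {n : ℕ} {C : Fin n → Type}

/-- Single-qubit superoperators. -/
abbrev LocalOp := Matrix (Fin 2) (Fin 2) ℂ →ₗ[ℂ] Matrix (Fin 2) (Fin 2) ℂ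

/-- `n`-qubit superoperators on the tensor product space. -/
abbrev GlobalOp (n : ℕ) :=
  (⨂[ℂ] _j : Fin n, Matrix (Fin 2) (Fin 2) ℂ) →ₗ[ℂ]
    (⨂[ℂ] _j : Fin n, Matrix (Fin 2) (Fin 2) ℂ)

/-- Local noise: the tensor product `⊗_j E_j(C̃_j)` of the local channels for a
tuple of dressed gates. -/
noncomputable def localNoise [∀ j, Fintype (C j)]
    (F : ∀ j, C j → LocalOp) (c : ∀ j, C j) : GlobalOp n :=
  PiTensorProduct.map (fun j => F j (c j))

/-- The uniform average `E^T` of the local noise over all tuples of dressed gates. -/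
noncomputable def avgNoise [∀ j, Fintype (C j)]
    (F : ∀ j, C j → LocalOp) : GlobalOp n :=
  ((Fintype.card (∀ j, C j) : ℂ))⁻¹ • ∑ c : ∀ j, C j, localNoise F c

/-- The average `Ē_j^T` of the local noise on qubit `j` over its dressed gates. -/
noncomputable def localAvg [∀ j, Fintype (C j)]
    (F : ∀ j, C j → LocalOp) (j : Fin n) : LocalOp :=
  ((Fintype.card (C j) : ℂ))⁻¹ • ∑ c : C j, F j c

/-! By the triangle inequality through the identity, `‖E(C̃) − E^T‖ ≤ ‖E(C̃) − I‖ + ‖E^T − I‖`,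
and the second term is at most the average of the first since `E^T − I` is the mean of the
`E(C̃) − I`; so the average deviation is at most twice the average distance of `E(C̃)` from `I`.
Swapping one tensor factor at a time and using the cross-norm property with local norms at most
`1` gives `‖⊗_j E_j − I‖ ≤ Σ_j ‖E_j − I‖ ≤ Σ_j 2 √(6 r(E_j))`. Each summand depends on one
qubit only, so its average is an average over that qubit's gates, and concavity of the square
root together with linearity of `r` bounds it by `2 √(6 r(Ē_j^T))`. -/

open Finset
open scoped BigOperators

lemma Real.expect_sqrt_le_sqrt_expect {ι : Type*} (s : Finset ι) {f : ι → ℝ}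
    (hf : ∀ i ∈ s, 0 ≤ f i) : 𝔼 i ∈ s, √(f i) ≤ √(𝔼 i ∈ s, f i) := by
  obtain rfl | hs := s.eq_empty_or_nonempty
  · simp
  refine le_sqrt_of_sq_le ?_
  have hsq : ∀ i ∈ s, √(f i) ^ 2 = f i := fun i hi ↦ sq_sqrt (hf i hi)
  simpa [expect_congr rfl hsq, expect_const hs] using
    expect_mul_sq_le_sq_mul_sq s (fun i ↦ √(f i)) fun _ ↦ 1

lemma Fintype.expect_comp_eval {ι : Type*} [Fintype ι] [DecidableEq ι] {C : ι → Type*}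
    [∀ i, Fintype (C i)] [∀ i, Nonempty (C i)] {M : Type*} [AddCommMonoid M] [Module ℚ≥0 M]
    (j : ι) (g : C j → M) :
    𝔼 c : ∀ i, C i, g (c j) = 𝔼 a, g a := by
  rw [Fintype.expect_equiv (Equiv.piSplitAt j C) (fun c ↦ g (c j)) (fun p ↦ g p.1) fun _ ↦ rfl,
    ← univ_product_univ, expect_product]
  simp

lemma Finset.prod_le_of_le_one_of_ne {ι : Type*} [DecidableEq ι] {s : Finset ι} {f : ι → ℝ}
    {i : ι} (hi : i ∈ s) (hf_nonneg : ∀ j ∈ s, 0 ≤ f j) (hf_le : ∀ j ∈ s, j ≠ i → f j ≤ 1) :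
    ∏ j ∈ s, f j ≤ f i := by
  rw [← mul_prod_erase s f hi]
  exact mul_le_of_le_one_right (hf_nonneg i hi) <|
    prod_le_one (fun j hj ↦ hf_nonneg j (mem_of_mem_erase hj))
      fun j hj ↦ hf_le j (mem_of_mem_erase hj) (ne_of_mem_erase hj)

section Subadditive

variable {M : Type*} [AddCommGroup M] [Module ℂ M] {N : M → ℝ}
  (hN_add : ∀ x y, N (x + y) ≤ N x + N y) (hN_smul : ∀ (a : ℝ) x, N ((a : ℂ) • x) = |a| * N x)
include hN_add hN_smul

lemma apply_inv_card_smul_sum_le_expect {ι : Type*} [Fintype ι] (x : ι → M) :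
    N ((Fintype.card ι : ℂ)⁻¹ • ∑ i, x i) ≤ 𝔼 i, N (x i) := by
  have hN_zero : N 0 = 0 := by simpa using hN_smul 0 0
  have hcast : (Fintype.card ι : ℂ)⁻¹ = ((Fintype.card ι : ℝ)⁻¹ : ℝ) := by push_cast; rfl
  rw [Fintype.expect_eq_sum_div_card, div_eq_inv_mul, hcast, hN_smul,
    abs_of_nonneg (by positivity)]
  gcongr
  exact le_sum_of_subadditive N hN_zero.le hN_add _ _

lemma expect_apply_sub_inv_card_smul_sum_le {ι : Type*} [Fintype ι] [Nonempty ι]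
    (hN_neg : ∀ x, N (-x) = N x) (x : ι → M) (z : M) :
    𝔼 i, N (x i - (Fintype.card ι : ℂ)⁻¹ • ∑ j, x j) ≤ 2 * 𝔼 i, N (x i - z) := by
  set mean := (Fintype.card ι : ℂ)⁻¹ • ∑ j, x j
  have hmean : mean - z = (Fintype.card ι : ℂ)⁻¹ • ∑ j, (x j - z) := by
    rw [sum_sub_distrib, smul_sub, sum_const, card_univ, ← Nat.cast_smul_eq_nsmul ℂ, smul_smul,
      inv_mul_cancel₀ (by simp [Fintype.card_ne_zero]), one_smul]
  have hmean_le : N (mean - z) ≤ 𝔼 j, N (x j - z) :=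
    hmean ▸ apply_inv_card_smul_sum_le_expect hN_add hN_smul _
  calc 𝔼 i, N (x i - mean)
      ≤ 𝔼 i, (N (x i - z) + 𝔼 j, N (x j - z)) := by
        refine expect_le_expect fun i _ ↦ ?_
        calc N (x i - mean) = N ((x i - z) + -(mean - z)) := by congr 1; abel
          _ ≤ N (x i - z) + N (mean - z) := (hN_add _ _).trans_eq (by rw [hN_neg])
          _ ≤ N (x i - z) + 𝔼 j, N (x j - z) := by gcongr
    _ = 2 * 𝔼 i, N (x i - z) := by rw [expect_add_distrib, Fintype.expect_const]; ring

end Subadditive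

lemma map_sub_map_le_sum {ι R M : Type*} [Fintype ι] [LinearOrder ι] [CommRing R]
    [AddCommGroup M] [Module R M] {N : ((⨂[R] _ : ι, M) →ₗ[R] ⨂[R] _ : ι, M) → ℝ}
    {nloc : (M →ₗ[R] M) → ℝ} (hN_zero : N 0 = 0) (hN_add : ∀ x y, N (x + y) ≤ N x + N y)
    (hcross : ∀ G : ι → M →ₗ[R] M, N (PiTensorProduct.map G) ≤ ∏ j, nloc (G j))
    (hl_nonneg : ∀ x, 0 ≤ nloc x) {G G' : ι → M →ₗ[R] M} (hG : ∀ j, nloc (G j) ≤ 1)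
    (hG' : ∀ j, nloc (G' j) ≤ 1) :
    N (PiTensorProduct.map G' - PiTensorProduct.map G) ≤ ∑ i, nloc (G' i - G i) := by
  have htelescope := (PiTensorProduct.mapMultilinear R (fun _ : ι ↦ M)
    (fun _ ↦ M)).map_sub_map_piecewise G' G univ
  simp only [piecewise_univ, PiTensorProduct.mapMultilinear_apply, mem_univ, true_imp_iff]
    at htelescope
  rw [htelescope]
  refine (le_sum_of_subadditive N hN_zero.le hN_add _ _).trans (sum_le_sum fun i _ ↦ ?_)
  refine (hcross _).trans <| (prod_le_of_le_one_of_ne (f := fun j ↦ nloc (if j < i then G' j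
    else if i = j then G' j - G j else G j)) (mem_univ i) (fun j _ ↦ hl_nonneg _)
    fun j _ hji ↦ ?_).trans_eq (by simp)
  -- the `i`-th term of the telescoping sum has `G' i - G i` in slot `i` and a `G'` or `G` elsewhere
  rcases hji.lt_or_gt with h | h
  · simp [h, hG']
  · simp [h.not_gt, hji.symm, hG]

theorem avg_deviation_le_local_infidelities_general
    [∀ j, Fintype (C j)] [∀ j, Nonempty (C j)]
    (F : ∀ j, C j → LocalOp)
    (N : GlobalOp n → ℝ) (nloc : LocalOp → ℝ) (r : LocalOp → ℝ)
    -- `N` is a seminorm (diamond norm on `n` qubits)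
    (hN_add : ∀ x y, N (x + y) ≤ N x + N y)
    (hN_neg : ∀ x, N (-x) = N x)
    (hN_smul : ∀ (a : ℝ) x, N ((a : ℂ) • x) = |a| * N x)
    -- `nloc` is a seminorm (diamond norm on one qubit)
    (hl_nonneg : ∀ x, 0 ≤ nloc x)
    -- cross-norm property (tensor subadditivity ingredients)
    (hcross : ∀ G : ∀ _j : Fin n, LocalOp,
      N (PiTensorProduct.map G) ≤ ∏ j, nloc (G j))
    (hid : nloc LinearMap.id = 1)
    -- channels have local diamond norm at most 1
    (hF_le : ∀ j c, nloc (F j c) ≤ 1)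
    -- infidelity is nonnegative on channels
    (hr_nonneg : ∀ j c, 0 ≤ r (F j c))
    -- fidelity–diamond bound `ε(E) ≤ √(6 r(E))` for the local channels
    (hfd : ∀ j c, (1 / 2 : ℝ) * nloc (F j c - LinearMap.id)
        ≤ Real.sqrt (6 * r (F j c)))
    -- linearity of the infidelity under mixing
    (hr_lin : ∀ j, (Fintype.card (C j) : ℝ)⁻¹ * ∑ c : C j, r (F j c)
        = r (localAvg F j)) :
    (Fintype.card (∀ j, C j) : ℝ)⁻¹ *
        ∑ c : ∀ j, C j, N (localNoise F c - avgNoise F)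
      ≤ ∑ j, 4 * Real.sqrt (6 * r (localAvg F j)) := by
  have hN_zero : N 0 = 0 := by simpa using hN_smul 0 0
  have hdist_id : ∀ c, N (localNoise F c - LinearMap.id) ≤ ∑ j, 2 * √(6 * r (F j (c j))) := by
    intro c
    rw [← PiTensorProduct.map_id]
    refine (map_sub_map_le_sum hN_zero hN_add hcross hl_nonneg (fun _ ↦ hid.le)
      fun j ↦ hF_le j (c j)).trans (sum_le_sum fun j _ ↦ ?_)
    linarith [hfd j (c j)]
  have hlocal : ∀ j, 𝔼 a, √(6 * r (F j a)) ≤ √(6 * r (localAvg F j)) := fun j ↦ by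
    refine (Real.expect_sqrt_le_sqrt_expect _ fun a _ ↦ by linarith [hr_nonneg j a]).trans_eq ?_
    rw [← mul_expect, Fintype.expect_eq_sum_div_card, div_eq_inv_mul, hr_lin]
  rw [inv_mul_eq_div, ← Fintype.expect_eq_sum_div_card]
  calc 𝔼 c, N (localNoise F c - avgNoise F)
      ≤ 2 * 𝔼 c, N (localNoise F c - LinearMap.id) := by
        unfold avgNoise
        exact expect_apply_sub_inv_card_smul_sum_le hN_add hN_smul hN_neg (localNoise F) _
    _ ≤ 2 * 𝔼 c : ∀ j, C j, ∑ j, 2 * √(6 * r (F j (c j))) := by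
        gcongr with c; exact hdist_id c
    _ = 2 * ∑ j, 𝔼 a, 2 * √(6 * r (F j a)) := by
        rw [expect_sum_comm]
        congr 1
        exact sum_congr rfl fun j _ ↦ Fintype.expect_comp_eval j fun a ↦ 2 * √(6 * r (F j a))
    _ ≤ 2 * ∑ j, 2 * √(6 * r (localAvg F j)) := by
        gcongr with j
        rw [← mul_expect]
        gcongr
        exact hlocal j
    _ = ∑ j, 4 * √(6 * r (localAvg F j)) := by
        simp_rw [mul_sum, ← mul_assoc]
        norm_num

/-- If the fidelity–diamond bound `ε(E) ≤ √(6 r(E))` holds for the single-qubit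
channels (and their averages), the noise is local, the diamond norm is a cross
seminorm for the local diamond norms, and the infidelity is linear under mixing,
then the average deviation from the twirled average satisfies
`E_C̃ ‖E(C̃) − E^T‖_◇ ≤ Σ_j 4 √(6 r(Ē_j^T))`. -/
theorem avg_deviation_le_local_infidelities
    [∀ j, Fintype (C j)] [∀ j, Nonempty (C j)]
    (F : ∀ j, C j → LocalOp)
    (N : GlobalOp n → ℝ) (nloc : LocalOp → ℝ) (r : LocalOp → ℝ)
    -- `N` is a seminorm (diamond norm on `n` qubits)
    (hN_nonneg : ∀ x, 0 ≤ N x)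
    (hN_add : ∀ x y, N (x + y) ≤ N x + N y)
    (hN_neg : ∀ x, N (-x) = N x)
    (hN_smul : ∀ (a : ℝ) x, N ((a : ℂ) • x) = |a| * N x)
    -- `nloc` is a seminorm (diamond norm on one qubit)
    (hl_nonneg : ∀ x, 0 ≤ nloc x)
    (hl_add : ∀ x y, nloc (x + y) ≤ nloc x + nloc y)
    (hl_neg : ∀ x, nloc (-x) = nloc x)
    (hl_smul : ∀ (a : ℝ) x, nloc ((a : ℂ) • x) = |a| * nloc x)
    -- cross-norm property (tensor subadditivity ingredients)
    (hcross : ∀ G : ∀ _j : Fin n, LocalOp,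
      N (PiTensorProduct.map G) ≤ ∏ j, nloc (G j))
    (hid : nloc LinearMap.id = 1)
    -- channels have local diamond norm at most 1
    (hF_le : ∀ j c, nloc (F j c) ≤ 1)
    -- infidelity is nonnegative on channels
    (hr_nonneg : ∀ j c, 0 ≤ r (F j c))
    -- fidelity–diamond bound `ε(E) ≤ √(6 r(E))` for the local channels
    (hfd : ∀ j c, (1 / 2 : ℝ) * nloc (F j c - LinearMap.id)
        ≤ Real.sqrt (6 * r (F j c)))
    -- and for their averages (which are again channels)
    (hfd_avg : ∀ j, (1 / 2 : ℝ) * nloc (localAvg F j - LinearMap.id)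
        ≤ Real.sqrt (6 * r (localAvg F j)))
    -- linearity of the infidelity under mixing
    (hr_lin : ∀ j, (Fintype.card (C j) : ℝ)⁻¹ * ∑ c : C j, r (F j c)
        = r (localAvg F j)) :
    (Fintype.card (∀ j, C j) : ℝ)⁻¹ *
        ∑ c : ∀ j, C j, N (localNoise F c - avgNoise F)
      ≤ ∑ j, 4 * Real.sqrt (6 * r (localAvg F j)) :=
  avg_deviation_le_local_infidelities_general F N nloc r hN_add hN_neg hN_smul hl_nonneg hcross hid
    hF_le hr_nonneg hfd hr_lin
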